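/- Let 0 < β < 1 be a constant. There exists a constant c > 0, depending only on β, such that for all r > 0, all u* ∈ ℝ, every integer n ≥ 1 and all distinct points u₁, …, uₙ ∈ O(u*, r), one has ∫_{O(u*,r)} du / (min_{1≤j≤n} |u - u_j|)^β ≤ c · n^β · r^{1-β}. -/

import Mathlib

open MeasureTheory Set

/-!
Layer-cake argument. The set where `(min_j |x - u_j|)^(-β) > t` is covered both by the ball, of
measure `2r`, and by the `n` intervals of radius `t^(-1/β)` around the `u_j`, of total measure
`2n t^(-1/β)`. Integrating `min (2r) (2n t^(-1/β))` over `t > 0`, split at `t = (n/r)^β`, gives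
the bound with `c = 2/(1-β)`; the exponent `1/β > 1` makes the tail integrable.
-/

theorem lintegral_ofReal_le_of_meas_lt_le {α : Type*} [MeasurableSpace α] {μ : Measure α}
    {f : α → ℝ} (hf : 0 ≤ᵐ[μ] f) (hfm : AEMeasurable f μ) {A C q s : ℝ} (hA : 0 ≤ A)
    (hC : 0 ≤ C) (hq : 1 < q) (hs : 0 < s) (hμA : μ univ ≤ ENNReal.ofReal A)
    (hμC : ∀ t, 0 < t → μ {x | t < f x} ≤ ENNReal.ofReal (C * t ^ (-q))) :
    ∫⁻ x, ENNReal.ofReal (f x) ∂μ ≤ ENNReal.ofReal (A * s + C * (s ^ (1 - q) / (q - 1))) := by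
  have hp : -q < -1 := by linarith
  have hsq : 0 ≤ s ^ (1 - q) / (q - 1) := div_nonneg (by positivity) (by linarith)
  rw [lintegral_eq_lintegral_meas_lt μ hf hfm, ← Ioc_union_Ioi_eq_Ioi hs.le,
    lintegral_union measurableSet_Ioi (Ioc_disjoint_Ioi le_rfl),
    ENNReal.ofReal_add (by positivity) (by positivity)]
  gcongr ?_ + ?_
  · calc ∫⁻ t in Ioc 0 s, μ {x | t < f x}
        ≤ ∫⁻ _ in Ioc 0 s, ENNReal.ofReal A :=
          setLIntegral_mono measurable_const fun t _ => (measure_mono (subset_univ _)).trans hμA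
      _ = ENNReal.ofReal (A * s) := by
          rw [setLIntegral_const, Real.volume_Ioc, sub_zero, ← ENNReal.ofReal_mul hA]
  · calc ∫⁻ t in Ioi s, μ {x | t < f x}
        ≤ ∫⁻ t in Ioi s, ENNReal.ofReal (C * t ^ (-q)) :=
          setLIntegral_mono (by fun_prop) fun t ht => hμC t (hs.trans ht)
      _ = ENNReal.ofReal (∫ t in Ioi s, C * t ^ (-q)) := by
          refine (ofReal_integral_eq_lintegral_ofReal
            ((integrableOn_Ioi_rpow_of_lt hp hs).const_mul C) ?_).symm
          filter_upwards [self_mem_ae_restrict measurableSet_Ioi] with t ht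
          have := Real.rpow_nonneg (hs.trans ht).le (-q)
          positivity
      _ = ENNReal.ofReal (C * (s ^ (1 - q) / (q - 1))) := by
          rw [integral_const_mul, integral_Ioi_rpow_of_lt hp hs, neg_add_eq_sub,
            ← neg_div_neg_eq, neg_neg, neg_sub]

theorem volume_setOf_iInf_abs_sub_lt_le {ι : Type*} [Fintype ι] [Nonempty ι] (u : ι → ℝ)
    (s : ℝ) : volume {x | ⨅ j, |x - u j| < s} ≤ ENNReal.ofReal (2 * Fintype.card ι * s) := by
  have hsub : {x | ⨅ j, |x - u j| < s} ⊆ ⋃ j, Metric.ball (u j) s := fun x hx => by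
    obtain ⟨j, hj⟩ := exists_lt_of_ciInf_lt (show ⨅ j, |x - u j| < s from hx)
    exact mem_iUnion.mpr ⟨j, by rwa [Metric.mem_ball, Real.dist_eq]⟩
  calc volume {x | ⨅ j, |x - u j| < s}
      ≤ ∑ j, volume (Metric.ball (u j) s) :=
        (measure_mono hsub).trans (measure_iUnion_fintype_le _ _)
    _ = ENNReal.ofReal (2 * Fintype.card ι * s) := by
        simp only [Real.volume_ball, Finset.sum_const, Finset.card_univ, nsmul_eq_mul]
        rw [← ENNReal.ofReal_natCast, ← ENNReal.ofReal_mul (by positivity)]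
        ring_nf

theorem lt_rpow_neg_inv_of_lt_inv_rpow {a t β : ℝ} (ha : 0 ≤ a) (ht : 0 < t) (hβ : 0 < β)
    (h : t < (a ^ β)⁻¹) : a < t ^ (-β⁻¹) := by
  rcases ha.eq_or_lt with rfl | ha
  · positivity
  rw [Real.rpow_neg ht.le, ← Real.inv_rpow ht.le,
    Real.lt_rpow_inv_iff_of_pos ha.le (by positivity) hβ]
  exact (lt_inv_comm₀ (by positivity) ht).mpr h

theorem volume_setOf_lt_inv_rpow_iInf_abs_sub_le {ι : Type*} [Fintype ι] [Nonempty ι]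
    (u : ι → ℝ) {β t : ℝ} (hβ : 0 < β) (ht : 0 < t) :
    volume {x | t < ((⨅ j, |x - u j|) ^ β)⁻¹}
      ≤ ENNReal.ofReal (2 * Fintype.card ι * t ^ (-β⁻¹)) :=
  (measure_mono fun _ hx =>
      lt_rpow_neg_inv_of_lt_inv_rpow (le_ciInf fun _ => abs_nonneg _) ht hβ hx).trans
    (volume_setOf_iInf_abs_sub_lt_le u _)

theorem ae_lt_iInf_abs_sub {ι : Type*} [Finite ι] [Nonempty ι] (u : ι → ℝ) :
    ∀ᵐ x, 0 < ⨅ j, |x - u j| := by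
  filter_upwards [(finite_range u).countable.ae_notMem volume] with x hx
  obtain ⟨j, hj⟩ := exists_eq_ciInf_of_finite (f := fun j => |x - u j|)
  rw [← hj]
  exact abs_pos.mpr (sub_ne_zero.mpr fun h => hx ⟨j, h.symm⟩)

theorem stmt5 (β : ℝ) (hβ : 0 < β) (hβ1 : β < 1) :
    ∃ c : ℝ, 0 < c ∧ ∀ r : ℝ, 0 < r → ∀ ustar : ℝ,
      ∀ n : ℕ, 1 ≤ n → ∀ u : Fin n → ℝ, Function.Injective u →
      (∀ j, u j ∈ Metric.ball ustar r) →
      (∫⁻ x in Metric.ball ustar r,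
          (ENNReal.ofReal ((⨅ j, |x - u j|) ^ β))⁻¹) ≤
        ENNReal.ofReal (c * (n : ℝ) ^ β * r ^ (1 - β)) := by
  refine ⟨2 / (1 - β), div_pos two_pos (by linarith), fun r hr ustar n hn u _ _ => ?_⟩
  have : Nonempty (Fin n) := Fin.pos_iff_nonempty.mp hn
  set g : ℝ → ℝ := fun x => ⨅ j, |x - u j|
  have hg0 (x : ℝ) : 0 ≤ g x := le_ciInf fun j => abs_nonneg _
  have hg : Measurable g := Measurable.iInf fun j => (measurable_id.sub measurable_const).abs
  have hae : ∀ᵐ x ∂volume.restrict (Metric.ball ustar r),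
      (ENNReal.ofReal (g x ^ β))⁻¹ = ENNReal.ofReal (g x ^ β)⁻¹ := by
    filter_upwards [ae_restrict_of_ae (ae_lt_iInf_abs_sub u)] with x hx
    exact (ENNReal.ofReal_inv_of_pos (Real.rpow_pos_of_pos hx β)).symm
  have hdist (t : ℝ) (ht : 0 < t) : volume.restrict (Metric.ball ustar r) {x | t < (g x ^ β)⁻¹}
      ≤ ENNReal.ofReal (2 * n * t ^ (-β⁻¹)) := by
    simpa only [Fintype.card_fin] using (Measure.restrict_le_self _).trans
      (volume_setOf_lt_inv_rpow_iInf_abs_sub_le u hβ ht)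
  have hn' : (0 : ℝ) < n := by exact_mod_cast hn
  have hnr : (n : ℝ) ^ β * r ^ (1 - β) = r * (n / r) ^ β := by
    rw [Real.div_rpow hn'.le hr.le, Real.rpow_sub hr, Real.rpow_one]; ring
  have hs_pow : (((n : ℝ) / r) ^ β) ^ (1 - β⁻¹) = (n / r) ^ β / (n / r) := by
    rw [← Real.rpow_mul (by positivity), mul_sub, mul_one, mul_inv_cancel₀ hβ.ne',
      Real.rpow_sub_one (by positivity)]
  rw [lintegral_congr_ae hae]
  calc _ ≤ ENNReal.ofReal (2 * r * (n / r) ^ β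
          + 2 * n * ((((n : ℝ) / r) ^ β) ^ (1 - β⁻¹) / (β⁻¹ - 1))) :=
        lintegral_ofReal_le_of_meas_lt_le
          (ae_of_all _ fun x => inv_nonneg.mpr (Real.rpow_nonneg (hg0 x) β))
          (hg.pow_const β).inv.aemeasurable (by positivity) (by positivity)
          ((one_lt_inv₀ hβ).mpr hβ1) (by positivity)
          (by rw [Measure.restrict_apply_univ, Real.volume_ball]) hdist
    _ = ENNReal.ofReal (2 / (1 - β) * (n : ℝ) ^ β * r ^ (1 - β)) := by
        rw [mul_assoc _ ((n : ℝ) ^ β), hnr, hs_pow]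
        congr 1
        field_simp [(sub_pos.mpr hβ1).ne']
        ring
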